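/- arXiv:1808.02245 — 11 statements merged into one kernel-verified Lean document; each statement's English description precedes it below -/
import Mathlib

section
/- Let γ be a unit-speed Frenet curve with curvature κ > 0 and torsion τ, and let β be the integral curve of X = xT + yN + zB with x² + y² + z² = 1. If the principal normal of β equals T (evolute condition, i.e., β'' is a nonzero multiple of T), then x ≡ 0, y(s) = sin(∫τ ds), and z(s) = cos(∫τ ds) (up to the choice of integration constant). -/
/-!
Differentiating `x² + y² + z² = 1` and substituting the two evolute equations gives
`x (x' - y κ) = 0`, so `x ≡ 0` because `x' - y κ` never vanishes. Then `x' ≡ 0`, hence `y` never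
vanishes: `(y, z)` moves on the unit circle avoiding the poles `z = ±1`, with `z' = -y τ`.
Since `y` has constant sign, `θ = ± arccos z` is a smooth angle with `θ' = τ`, `y = sin θ`, `z = cos θ`.
-/

open Real

theorem HasDerivAt.eq_zero_of_forall_eq {𝕜 F : Type*} [NontriviallyNormedField 𝕜]
    [NormedAddCommGroup F] [NormedSpace 𝕜 F] {f : 𝕜 → F} {f' c : F} {s : 𝕜}
    (hf : HasDerivAt f f' s) (hc : ∀ t, f t = c) : f' = 0 := by
  obtain rfl : f = fun _ => c := funext hc
  exact hf.unique (hasDerivAt_const s c)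

theorem sqrt_one_sub_sq_eq_abs {a b : ℝ} (h : a ^ 2 + b ^ 2 = 1) : √(1 - b ^ 2) = |a| := by
  rw [← sqrt_sq_eq_abs, ← h, add_sub_cancel_right]

theorem hasDerivAt_arccos_of_sq_add_sq_eq_one {y z : ℝ → ℝ} {τ s : ℝ} (hy : y s ≠ 0)
    (hyz : y s ^ 2 + z s ^ 2 = 1) (hz : HasDerivAt z (-(y s * τ)) s) :
    HasDerivAt (fun t => arccos (z t)) (y s * τ / |y s|) s := by
  have hpoles : z s ≠ -1 ∧ z s ≠ 1 := by
    have : 0 < y s ^ 2 := by positivity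
    constructor <;> rintro h <;> rw [h] at hyz <;> linarith
  refine ((hasDerivAt_arccos hpoles.1 hpoles.2).comp s hz).congr_deriv ?_
  rw [sqrt_one_sub_sq_eq_abs hyz]
  ring

theorem exists_angle_of_sq_add_sq_eq_one {y z τ : ℝ → ℝ} (hy : Continuous y)
    (hy0 : ∀ s, y s ≠ 0) (hyz : ∀ s, y s ^ 2 + z s ^ 2 = 1)
    (hz : ∀ s, HasDerivAt z (-(y s * τ s)) s) :
    ∃ θ : ℝ → ℝ, (∀ s, HasDerivAt θ (τ s) s) ∧ ∀ s, y s = sin (θ s) ∧ z s = cos (θ s) := by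
  have hsin : ∀ s, sin (arccos (z s)) = |y s| := fun s => by
    rw [sin_arccos, sqrt_one_sub_sq_eq_abs (hyz s)]
  have hcos : ∀ s, cos (arccos (z s)) = z s := fun s =>
    cos_arccos (by nlinarith [hyz s, sq_nonneg (y s)]) (by nlinarith [hyz s, sq_nonneg (y s)])
  have hderiv : ∀ s, HasDerivAt (fun t => arccos (z t)) (y s * τ s / |y s|) s := fun s =>
    hasDerivAt_arccos_of_sq_add_sq_eq_one (hy0 s) (hyz s) (hz s)
  rcases isPreconnected_univ.eq_or_eq_neg_of_sq_eq (f := fun s => |y s|) (g := y)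
      hy.abs.continuousOn hy.continuousOn (fun s _ => sq_abs (y s)) (fun {s} _ => hy0 s)
    with hpos | hneg
  · have hpos (s : ℝ) : |y s| = y s := hpos (Set.mem_univ s)
    refine ⟨fun t => arccos (z t), fun s => ?_, fun s => ⟨?_, (hcos s).symm⟩⟩
    · refine (hderiv s).congr_deriv ?_
      rw [hpos]
      field_simp [hy0 s]
    · rw [hsin, hpos]
  · have hneg (s : ℝ) : |y s| = -y s := hneg (Set.mem_univ s)
    refine ⟨fun t => -arccos (z t), fun s => ?_, fun s => ⟨?_, by rw [cos_neg, hcos]⟩⟩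
    · refine (hderiv s).neg.congr_deriv ?_
      rw [hneg]
      field_simp [hy0 s]
    · rw [sin_neg, hsin, hneg, neg_neg]

theorem evolute_direction_coefficients_general
    (κ τ x y z x' y' z' : ℝ → ℝ)
    (hx : ∀ s, HasDerivAt x (x' s) s)
    (hy : ∀ s, HasDerivAt y (y' s) s)
    (hz : ∀ s, HasDerivAt z (z' s) s)
    (hunit : ∀ s, x s ^ 2 + y s ^ 2 + z s ^ 2 = 1)
    (hev1 : ∀ s, y' s + x s * κ s - z s * τ s = 0)
    (hev2 : ∀ s, z' s + y s * τ s = 0)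
    (hev3 : ∀ s, x' s - y s * κ s ≠ 0) :
    (∀ s, x s = 0) ∧
      ∃ θ : ℝ → ℝ, (∀ s, HasDerivAt θ (τ s) s) ∧
        ∀ s, y s = sin (θ s) ∧ z s = cos (θ s) := by
  have hx0 : ∀ s, x s = 0 := fun s => by
    have horth := ((((hx s).pow 2).add ((hy s).pow 2)).add ((hz s).pow 2)).eq_zero_of_forall_eq
      hunit
    have : x s * (x' s - y s * κ s) = 0 := by
      linear_combination horth / 2 - y s * hev1 s - z s * hev2 s
    exact (mul_eq_zero.mp this).resolve_right (hev3 s)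
  have hx'0 : ∀ s, x' s = 0 := fun s => (hx s).eq_zero_of_forall_eq hx0
  refine ⟨hx0, exists_angle_of_sq_add_sq_eq_one ?_ (fun s hys => ?_) (fun s => ?_) (fun s => ?_)⟩
  · exact continuous_iff_continuousAt.mpr fun s => (hy s).continuousAt
  · exact hev3 s (by rw [hx'0 s, hys]; ring)
  · simpa [hx0 s] using hunit s
  · exact (hz s).congr_deriv (by linear_combination hev2 s)

/-- evolute condition forces `x ≡ 0`, `y = sin(∫τ)`, `z = cos(∫τ)`. -/
theorem evolute_direction_coefficients
    (κ τ x y z x' y' z' : ℝ → ℝ)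
    (hκ : ∀ s, 0 < κ s)
    (hx : ∀ s, HasDerivAt x (x' s) s)
    (hy : ∀ s, HasDerivAt y (y' s) s)
    (hz : ∀ s, HasDerivAt z (z' s) s)
    (hunit : ∀ s, x s ^ 2 + y s ^ 2 + z s ^ 2 = 1)
    (hev1 : ∀ s, y' s + x s * κ s - z s * τ s = 0)
    (hev2 : ∀ s, z' s + y s * τ s = 0)
    (hev3 : ∀ s, x' s - y s * κ s ≠ 0) :
    (∀ s, x s = 0) ∧
      ∃ θ : ℝ → ℝ, (∀ s, HasDerivAt θ (τ s) s) ∧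
        ∀ s, y s = sin (θ s) ∧ z s = cos (θ s) :=
  evolute_direction_coefficients_general κ τ x y z x' y' z' hx hy hz hunit hev1 hev2 hev3
end

section
/- With β the evolute-direction curve defined by β' = sin(θ)N + cos(θ)B where θ' = τ along a unit-speed curve γ with curvature κ > 0, the curvatures satisfy κ = √(κ_β² + τ_β²) and τ = (κ_β²/(κ_β² + τ_β²))·(τ_β/κ_β)'. -/
open Real

/-! `(κ_β, τ_β)` is the vector of length `κ` and angle `θ + π/2`, so `κ_β² + τ_β² = κ²`, and
`τ_β / κ_β = -cot θ`, whose derivative is `θ' / sin² θ = τ κ² / κ_β²`. -/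

theorem neg_mul_sin_sq_add_mul_cos_sq (r x : ℝ) :
    (-r * sin x) ^ 2 + (r * cos x) ^ 2 = r ^ 2 := by
  linear_combination r ^ 2 * sin_sq_add_cos_sq x

theorem mul_cos_div_neg_mul_sin {r : ℝ} (hr : r ≠ 0) (x : ℝ) :
    r * cos x / (-r * sin x) = -(cos x / sin x) := by
  rw [neg_mul, div_neg, mul_div_mul_left _ _ hr]

theorem hasDerivAt_cos_div_sin_comp {f : ℝ → ℝ} {f' x : ℝ} (hf : HasDerivAt f f' x)
    (hx : sin (f x) ≠ 0) :
    HasDerivAt (fun u => cos (f u) / sin (f u)) (-f' / sin (f x) ^ 2) x :=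
  (hf.cos.fun_div hf.sin hx).congr_deriv <| by
    linear_combination -f' * sin_sq_add_cos_sq (f x) / sin (f x) ^ 2

/-- with `κ_β = -κ sin θ`, `τ_β = κ cos θ` (θ' = τ), we have
`κ = √(κ_β² + τ_β²)` and `τ = (κ_β²/(κ_β²+τ_β²))·(τ_β/κ_β)'`. -/
theorem evolute_direction_curvatures_inverse
    (κ τ θ : ℝ → ℝ)
    (hκ : ∀ s, 0 < κ s)
    (hθ : ∀ s, HasDerivAt θ (τ s) s)
    (hsin : ∀ s, sin (θ s) ≠ 0)
    (κβ τβ : ℝ → ℝ)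
    (hκβ : ∀ s, κβ s = -(κ s) * sin (θ s))
    (hτβ : ∀ s, τβ s = κ s * cos (θ s)) :
    ∀ s, κ s = Real.sqrt (κβ s ^ 2 + τβ s ^ 2) ∧
      τ s = κβ s ^ 2 / (κβ s ^ 2 + τβ s ^ 2)
        * deriv (fun u => τβ u / κβ u) s := by
  intro s
  have hsum : κβ s ^ 2 + τβ s ^ 2 = κ s ^ 2 := by
    rw [hκβ, hτβ, neg_mul_sin_sq_add_mul_cos_sq]
  have hratio : (fun u => τβ u / κβ u) = fun u => -(cos (θ u) / sin (θ u)) := by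
    funext u
    rw [hκβ, hτβ, mul_cos_div_neg_mul_sin (hκ u).ne']
  have hderiv : deriv (fun u => τβ u / κβ u) s = τ s / sin (θ s) ^ 2 := by
    rw [hratio, (hasDerivAt_cos_div_sin_comp (hθ s) (hsin s)).fun_neg.deriv, neg_div, neg_neg]
  refine ⟨by rw [hsum, sqrt_sq (hκ s).le], ?_⟩
  rw [hderiv, hsum, hκβ]
  field_simp [(hκ s).ne', hsin s]
end

section
/- With β the evolute-direction curve (β' = sin(θ)N + cos(θ)B, θ' = τ) of a unit-speed curve γ with κ > 0, the ratio τ_β/κ_β equals -cot(θ). Consequently, τ_β/κ_β is constant if and only if θ is constant, i.e., if and only if τ ≡ 0. -/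
open Real

/-! The ratio `τ_β / κ_β = κ cos θ / (-κ sin θ)` is `-cot θ`, since `κ ≠ 0`. Because
`(cot θ)' = -θ' / sin² θ` and `sin θ` never vanishes, `cot θ` is constant exactly when `θ' = τ`
vanishes identically, which on `ℝ` is exactly when `θ` is constant. -/

theorem exists_forall_eq_iff_forall_eq_zero_of_hasDerivAt {E : Type*} [NormedAddCommGroup E]
    [NormedSpace ℝ E] {f f' : ℝ → E} (hf : ∀ x, HasDerivAt f (f' x) x) :
    (∃ c, ∀ x, f x = c) ↔ ∀ x, f' x = 0 := by
  constructor
  · rintro ⟨c, hc⟩ x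
    rw [funext hc] at hf
    exact (hf x).unique (hasDerivAt_const x c)
  · intro hf'
    refine ⟨f 0, fun x => ?_⟩
    exact is_const_of_deriv_eq_zero (fun y => (hf y).differentiableAt)
      (fun y => (hf y).deriv.trans (hf' y)) x 0

theorem hasDerivAt_cos_div_sin_comp_s6 {θ : ℝ → ℝ} {τ s : ℝ} (hθ : HasDerivAt θ τ s)
    (hsin : sin (θ s) ≠ 0) :
    HasDerivAt (fun s => cos (θ s) / sin (θ s)) (-τ / sin (θ s) ^ 2) s := by
  refine (hθ.cos.div hθ.sin hsin).congr_deriv (congrArg (· / sin (θ s) ^ 2) ?_)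
  linear_combination -τ * sin_sq_add_cos_sq (θ s)

theorem exists_forall_cos_div_sin_eq_iff {θ τ : ℝ → ℝ} (hθ : ∀ s, HasDerivAt θ (τ s) s)
    (hsin : ∀ s, sin (θ s) ≠ 0) :
    (∃ c, ∀ s, cos (θ s) / sin (θ s) = c) ↔ ∃ c, ∀ s, θ s = c := by
  rw [exists_forall_eq_iff_forall_eq_zero_of_hasDerivAt
      fun s => hasDerivAt_cos_div_sin_comp_s6 (hθ s) (hsin s),
    exists_forall_eq_iff_forall_eq_zero_of_hasDerivAt hθ]
  refine forall_congr' fun s => ?_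
  simp [hsin s]

theorem exists_forall_neg_eq_iff {α : Type*} {f : α → ℝ} :
    (∃ c, ∀ x, -f x = c) ↔ ∃ c, ∀ x, f x = c :=
  ⟨fun ⟨c, hc⟩ => ⟨-c, fun x => by rw [← hc, neg_neg]⟩,
    fun ⟨c, hc⟩ => ⟨-c, fun x => by rw [hc]⟩⟩

/-- for the evolute-direction curve, `τ_β/κ_β = -cot θ`;
it is constant iff θ is constant iff `τ ≡ 0`. -/
theorem evolute_direction_helix_ratio
    (κ τ θ : ℝ → ℝ)
    (hκ : ∀ s, 0 < κ s)
    (hθ : ∀ s, HasDerivAt θ (τ s) s)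
    (hsin : ∀ s, sin (θ s) ≠ 0)
    (κβ τβ : ℝ → ℝ)
    (hκβ : ∀ s, κβ s = -(κ s) * sin (θ s))
    (hτβ : ∀ s, τβ s = κ s * cos (θ s)) :
    (∀ s, τβ s / κβ s = -(cos (θ s) / sin (θ s))) ∧
    ((∃ c, ∀ s, τβ s / κβ s = c) ↔ (∃ c, ∀ s, θ s = c)) ∧
    ((∃ c, ∀ s, θ s = c) ↔ ∀ s, τ s = 0) := by
  have hratio : ∀ s, τβ s / κβ s = -(cos (θ s) / sin (θ s)) := fun s => by
    rw [hκβ, hτβ, neg_mul, div_neg, mul_div_mul_left _ _ (hκ s).ne']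
  refine ⟨hratio, ?_, exists_forall_eq_iff_forall_eq_zero_of_hasDerivAt hθ⟩
  simp only [hratio]
  exact exists_forall_neg_eq_iff.trans (exists_forall_cos_div_sin_eq_iff hθ hsin)
end

section
/- Let γ be a unit-speed Frenet curve with κ > 0 and let β be the integral curve of X = xT + yN + zB with x² + y² + z² = 1. If the principal normal of β equals N (Bertrand condition, i.e., β'' is a nonzero multiple of N), then x and z are constants with x² + z² = 1; that is, x = cos θ, y = 0, z = sin θ for some constant angle θ. -/
/-!
Differentiating `x² + y² + z² = 1` and substituting the Bertrand equations `x' = yκ`,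
`z' = -yτ` gives `y (y' + xκ - zτ) = 0`, so `y ≡ 0` because the second factor never vanishes.
Then `x' = z' = 0`, so `x` and `z` are constants on the unit circle.
-/

open Real

theorem Real.exists_cos_eq_sin_eq_of_sq_add_sq_eq_one {a b : ℝ} (h : a ^ 2 + b ^ 2 = 1) :
    ∃ θ : ℝ, cos θ = a ∧ sin θ = b := by
  set w : ℂ := ⟨a, b⟩
  have hw : ‖w‖ = 1 := by
    rw [Complex.norm_def, Complex.normSq_apply, ← sq, ← sq, h, sqrt_one]
  exact ⟨Complex.arg w, by simpa [hw] using Complex.norm_mul_cos_arg w,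
    by simpa [hw] using Complex.norm_mul_sin_arg w⟩

theorem eq_of_hasDerivAt_zero {𝕜 G : Type*} [RCLike 𝕜] [NormedAddCommGroup G]
    [NormedSpace 𝕜 G] {f : 𝕜 → G} (hf : ∀ s, HasDerivAt f 0 s) (s t : 𝕜) : f s = f t :=
  is_const_of_deriv_eq_zero (fun u => (hf u).differentiableAt) (fun u => (hf u).deriv) s t

theorem sum_mul_deriv_eq_zero_of_sum_sq_eq_const {x y z x' y' z' : ℝ → ℝ} {c : ℝ}
    (hx : ∀ s, HasDerivAt x (x' s) s) (hy : ∀ s, HasDerivAt y (y' s) s)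
    (hz : ∀ s, HasDerivAt z (z' s) s) (hc : ∀ s, x s ^ 2 + y s ^ 2 + z s ^ 2 = c) (s : ℝ) :
    x s * x' s + y s * y' s + z s * z' s = 0 := by
  have hsum : HasDerivAt (fun t => x t ^ 2 + y t ^ 2 + z t ^ 2)
      (2 * (x s * x' s + y s * y' s + z s * z' s)) s := by
    refine (((hx s).fun_pow 2).fun_add ((hy s).fun_pow 2)).fun_add ((hz s).fun_pow 2)
      |>.congr_deriv ?_
    norm_num
    ring
  rw [funext hc] at hsum
  simpa using hsum.unique (hasDerivAt_const s c)

theorem eq_zero_of_bertrand {κ τ x y z x' y' z' : ℝ → ℝ}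
    (hx : ∀ s, HasDerivAt x (x' s) s) (hy : ∀ s, HasDerivAt y (y' s) s)
    (hz : ∀ s, HasDerivAt z (z' s) s) (hunit : ∀ s, x s ^ 2 + y s ^ 2 + z s ^ 2 = 1) {s : ℝ}
    (hb1 : x' s - y s * κ s = 0) (hb2 : z' s + y s * τ s = 0)
    (hb3 : y' s + x s * κ s - z s * τ s ≠ 0) : y s = 0 := by
  have horth := sum_mul_deriv_eq_zero_of_sum_sq_eq_const hx hy hz hunit s
  have hprod : y s * (y' s + x s * κ s - z s * τ s) = 0 := by
    linear_combination horth - x s * hb1 - z s * hb2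
  exact (mul_eq_zero.mp hprod).resolve_right hb3

theorem bertrand_direction_coefficients_general
    (κ τ x y z x' y' z' : ℝ → ℝ)
    (hx : ∀ s, HasDerivAt x (x' s) s)
    (hy : ∀ s, HasDerivAt y (y' s) s)
    (hz : ∀ s, HasDerivAt z (z' s) s)
    (hunit : ∀ s, x s ^ 2 + y s ^ 2 + z s ^ 2 = 1)
    (hb1 : ∀ s, x' s - y s * κ s = 0)
    (hb2 : ∀ s, z' s + y s * τ s = 0)
    (hb3 : ∀ s, y' s + x s * κ s - z s * τ s ≠ 0) :
    ∃ θ : ℝ, ∀ s, x s = cos θ ∧ y s = 0 ∧ z s = sin θ := by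
  have hy0 : ∀ s, y s = 0 := fun s => eq_zero_of_bertrand hx hy hz hunit (hb1 s) (hb2 s) (hb3 s)
  have hx' : ∀ s, HasDerivAt x 0 s := fun s => by
    simpa [hy0 s, sub_eq_zero.mp (hb1 s)] using hx s
  have hz' : ∀ s, HasDerivAt z 0 s := fun s => by
    simpa [hy0 s, eq_neg_of_add_eq_zero_left (hb2 s)] using hz s
  obtain ⟨θ, hcos, hsin⟩ :=
    exists_cos_eq_sin_eq_of_sq_add_sq_eq_one (by simpa [hy0 0] using hunit 0)
  refine ⟨θ, fun s => ⟨?_, hy0 s, ?_⟩⟩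
  · rw [eq_of_hasDerivAt_zero hx' s 0, hcos]
  · rw [eq_of_hasDerivAt_zero hz' s 0, hsin]

/-- Bertrand condition forces `x = cos θ`, `y = 0`, `z = sin θ`
for some constant θ. -/
theorem bertrand_direction_coefficients
    (κ τ x y z x' y' z' : ℝ → ℝ)
    (hκ : ∀ s, 0 < κ s)
    (hx : ∀ s, HasDerivAt x (x' s) s)
    (hy : ∀ s, HasDerivAt y (y' s) s)
    (hz : ∀ s, HasDerivAt z (z' s) s)
    (hunit : ∀ s, x s ^ 2 + y s ^ 2 + z s ^ 2 = 1)
    (hb1 : ∀ s, x' s - y s * κ s = 0)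
    (hb2 : ∀ s, z' s + y s * τ s = 0)
    (hb3 : ∀ s, y' s + x s * κ s - z s * τ s ≠ 0) :
    ∃ θ : ℝ, ∀ s, x s = cos θ ∧ y s = 0 ∧ z s = sin θ :=
  bertrand_direction_coefficients_general κ τ x y z x' y' z' hx hy hz hunit hb1 hb2 hb3
end

section
/- For the Bertrand-direction curve β (β' = cos(θ)T + sin(θ)B, θ constant) of a unit-speed curve γ with κ > 0, one has τ/κ = (-sin θ + (τ_β/κ_β)cos θ)/(cos θ + (τ_β/κ_β)sin θ), provided κ_β ≠ 0 and cos θ + (τ_β/κ_β)sin θ ≠ 0. -/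
open Real

/-- for the Bertrand-direction curve,
`τ/κ = (-sin θ + (τ_β/κ_β)cos θ)/(cos θ + (τ_β/κ_β)sin θ)`. -/
theorem bertrand_direction_ratio
    (κ τ : ℝ → ℝ) (θ : ℝ)
    (hκ : ∀ s, 0 < κ s)
    (κβ τβ : ℝ → ℝ)
    (hκβ : ∀ s, κβ s = κ s * cos θ - τ s * sin θ)
    (hτβ : ∀ s, τβ s = κ s * sin θ + τ s * cos θ)
    (hκβne : ∀ s, κβ s ≠ 0)
    (hden : ∀ s, cos θ + (τβ s / κβ s) * sin θ ≠ 0) :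
    ∀ s, τ s / κ s =
      (-sin θ + (τβ s / κβ s) * cos θ) / (cos θ + (τβ s / κβ s) * sin θ) := by
  intro s
  have hne := hκβne s
  have h1 : -sin θ + τβ s / κβ s * cos θ = τ s / κβ s := by
    rw [hτβ]
    field_simp
    rw [hκβ]
    linear_combination τ s * (sin_sq_add_cos_sq θ)
  have h2 : cos θ + τβ s / κβ s * sin θ = κ s / κβ s := by
    rw [hτβ]
    field_simp
    rw [hκβ]
    linear_combination κ s * (sin_sq_add_cos_sq θ)
  rw [h1, h2]
  field_simp
end

section
/- For the Bertrand-direction curve β of γ (β' = cos(θ)T + sin(θ)B, θ constant), the slant-helix functions agree: κ²/(κ² + τ²)^{3/2} · (τ/κ)' = κ_β²/(κ_β² + τ_β²)^{3/2} · (τ_β/κ_β)'. In particular, γ is a slant helix if and only if β is a slant helix. -/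
open Real

/-- the slant-helix functions of γ and of its Bertrand-direction
curve β agree; in particular γ is a slant helix iff β is. -/
theorem bertrand_direction_slant_helix
    (κ τ κ' τ' : ℝ → ℝ) (θ : ℝ)
    (hκ : ∀ s, 0 < κ s)
    (hκd : ∀ s, HasDerivAt κ (κ' s) s)
    (hτd : ∀ s, HasDerivAt τ (τ' s) s)
    (κβ τβ : ℝ → ℝ)
    (hκβ : ∀ s, κβ s = κ s * cos θ - τ s * sin θ)
    (hτβ : ∀ s, τβ s = κ s * sin θ + τ s * cos θ)
    (hκβpos : ∀ s, 0 < κβ s) :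
    (∀ s, κ s ^ 2 / (κ s ^ 2 + τ s ^ 2) ^ ((3:ℝ)/2)
        * deriv (fun u => τ u / κ u) s
      = κβ s ^ 2 / (κβ s ^ 2 + τβ s ^ 2) ^ ((3:ℝ)/2)
        * deriv (fun u => τβ u / κβ u) s) ∧
    ((∃ c, ∀ s, κ s ^ 2 / (κ s ^ 2 + τ s ^ 2) ^ ((3:ℝ)/2)
        * deriv (fun u => τ u / κ u) s = c) ↔
     (∃ c, ∀ s, κβ s ^ 2 / (κβ s ^ 2 + τβ s ^ 2) ^ ((3:ℝ)/2)
        * deriv (fun u => τβ u / κβ u) s = c)) := by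
  have hEq : ∀ s, κβ s ^ 2 + τβ s ^ 2 = κ s ^ 2 + τ s ^ 2 := by
    intro s; rw [hκβ, hτβ]; nlinarith [sin_sq_add_cos_sq θ]
  have main : ∀ s, κ s ^ 2 / (κ s ^ 2 + τ s ^ 2) ^ ((3:ℝ)/2)
        * deriv (fun u => τ u / κ u) s
      = κβ s ^ 2 / (κβ s ^ 2 + τβ s ^ 2) ^ ((3:ℝ)/2)
        * deriv (fun u => τβ u / κβ u) s := by
    intro s
    have hκne := (hκ s).ne'
    have hκβne := (hκβpos s).ne'
    have d1 : deriv (fun u => τ u / κ u) s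
        = (τ' s * κ s - τ s * κ' s) / κ s ^ 2 := ((hτd s).div (hκd s) hκne).deriv
    have hfβ : (fun u => τβ u / κβ u)
        = fun u => (κ u * sin θ + τ u * cos θ) / (κ u * cos θ - τ u * sin θ) := by
      funext u; rw [hκβ, hτβ]
    have hκβd : HasDerivAt (fun u => κ u * cos θ - τ u * sin θ)
        (κ' s * cos θ - τ' s * sin θ) s :=
      ((hκd s).mul_const _).sub ((hτd s).mul_const _)
    have hτβd : HasDerivAt (fun u => κ u * sin θ + τ u * cos θ)
        (κ' s * sin θ + τ' s * cos θ) s :=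
      ((hκd s).mul_const _).add ((hτd s).mul_const _)
    have hne2 : κ s * cos θ - τ s * sin θ ≠ 0 := by rw [← hκβ]; exact hκβne
    have d2 : deriv (fun u => τβ u / κβ u) s
        = ((κ' s * sin θ + τ' s * cos θ) * (κ s * cos θ - τ s * sin θ)
          - (κ s * sin θ + τ s * cos θ) * (κ' s * cos θ - τ' s * sin θ))
          / (κ s * cos θ - τ s * sin θ) ^ 2 := by
      rw [hfβ]; exact (hτβd.div hκβd hne2).deriv
    have hnum : (κ' s * sin θ + τ' s * cos θ) * (κ s * cos θ - τ s * sin θ)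
          - (κ s * sin θ + τ s * cos θ) * (κ' s * cos θ - τ' s * sin θ)
        = τ' s * κ s - τ s * κ' s := by
      linear_combination (τ' s * κ s - τ s * κ' s) * sin_sq_add_cos_sq θ
    have hpow : (κ s ^ 2 + τ s ^ 2) ^ ((3:ℝ)/2) ≠ 0 :=
      (Real.rpow_pos_of_pos (by positivity) _).ne'
    rw [d1, d2, hEq s, hκβ s, hnum]
    field_simp
  refine ⟨main, ?_⟩
  exact ⟨fun ⟨c, hc⟩ => ⟨c, fun s => (main s).symm.trans (hc s)⟩,
         fun ⟨c, hc⟩ => ⟨c, fun s => (main s).trans (hc s)⟩⟩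
end

section
/- For the Bertrand-direction curve β of γ (β' = cos(θ)T + sin(θ)B, θ constant), the ratio τ/κ of γ is a constant function if and only if τ_β/κ_β is a constant function; i.e., γ is a general helix if and only if β is a general helix. -/
open Real

/-- γ is a general helix (τ/κ constant) iff its
Bertrand-direction curve β is a general helix (τ_β/κ_β constant). -/
theorem bertrand_direction_general_helix
    (κ τ : ℝ → ℝ) (θ : ℝ)
    (hκ : ∀ s, 0 < κ s)
    (κβ τβ : ℝ → ℝ)
    (hκβ : ∀ s, κβ s = κ s * cos θ - τ s * sin θ)
    (hτβ : ∀ s, τβ s = κ s * sin θ + τ s * cos θ)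
    (hκβne : ∀ s, κβ s ≠ 0) :
    (∃ c, ∀ s, τ s / κ s = c) ↔ (∃ c, ∀ s, τβ s / κβ s = c) := by
  constructor
  · rintro ⟨c, hc⟩
    have hτ : ∀ s, τ s = c * κ s := fun s => by
      have := (div_eq_iff (hκ s).ne').mp (hc s); linarith
    have hd : cos θ - c * sin θ ≠ 0 := by
      intro h
      apply hκβne 0
      rw [hκβ 0, hτ 0]
      linear_combination κ 0 * h
    refine ⟨(sin θ + c * cos θ) / (cos θ - c * sin θ), fun s => ?_⟩
    rw [hτβ, hκβ, hτ s]
    have h1 : κ s * cos θ - c * κ s * sin θ ≠ 0 := by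
      intro h
      have h' : κ s * (cos θ - c * sin θ) = 0 := by linear_combination h
      rcases mul_eq_zero.mp h' with h | h
      · exact (hκ s).ne' h
      · exact hd h
    rw [div_eq_div_iff h1 hd]
    ring
  · rintro ⟨c, hc⟩
    have key : ∀ s, τ s * (cos θ + c * sin θ) = κ s * (c * cos θ - sin θ) := fun s => by
      have h1 := (div_eq_iff (hκβne s)).mp (hc s)
      rw [hτβ, hκβ] at h1
      linear_combination h1
    by_cases hd : cos θ + c * sin θ = 0
    · exfalso
      have h0 := key 0
      rw [hd, mul_zero] at h0
      have h2 : c * cos θ - sin θ = 0 := by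
        rcases mul_eq_zero.mp h0.symm with h | h
        · exact absurd h (hκ 0).ne'
        · exact h
      have hcontra : (1 : ℝ) = 0 := by
        linear_combination cos θ * hd - sin θ * h2 - sin_sq_add_cos_sq θ
      exact one_ne_zero hcontra
    · exact ⟨(c * cos θ - sin θ) / (cos θ + c * sin θ), fun s => by
        rw [div_eq_div_iff (hκ s).ne' hd]; linear_combination key s⟩
end

section
/- Let γ be a unit-speed Frenet curve with κ > 0 and let β be the integral curve of X = xT + yN + zB with x² + y² + z² = 1. If the principal normal of β equals B (Mannheim condition, i.e., β'' is a nonzero multiple of B), then z ≡ 0, x(s) = sin(∫κ ds), and y(s) = cos(∫κ ds) (up to integration constant). -/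
/-!
Differentiating `x² + y² + z² = 1` and substituting the first two Mannheim equations gives
`z (z' + y τ) = 0`, so `z ≡ 0`. Then `(x, y)` is a unit vector turning with angular speed `κ`:
`w = y + x i` satisfies `w' = i κ w`. Lifting `w : ℝ → S¹` through the covering map
`t ↦ exp (t i)` gives a continuous angle `φ` with `w = exp (φ i)`, and near each `s` the
increment `φ t - φ s` is the principal argument of `w t / w s`, whose derivative is
`Im (w' / w) = κ`.
-/

open Real

open Complex in
theorem exists_continuous_exp_mul_I_eq {w : ℝ → ℂ} (hw : Continuous w)
    (hnorm : ∀ t, ‖w t‖ = 1) : ∃ φ : ℝ → ℝ, Continuous φ ∧ ∀ t, exp (φ t * I) = w t := by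
  let c : C(ℝ, Circle) :=
    ⟨fun t => ⟨w t, mem_sphere_zero_iff_norm.2 (hnorm t)⟩, hw.subtype_mk _⟩
  obtain ⟨φ₀, hφ₀⟩ := Circle.exp_surjective (c 0)
  obtain ⟨φ, -, hφ⟩ := (Circle.isCoveringMap_exp.existsUnique_continuousMap_lifts c 0 φ₀ hφ₀).exists
  refine ⟨φ, φ.continuous, fun t => ?_⟩
  rw [← Circle.coe_exp]
  exact congrArg Subtype.val (congrFun hφ t)

open Complex Filter Topology in
theorem HasDerivAt.of_exp_mul_I_eq {φ : ℝ → ℝ} {w : ℝ → ℂ} {w' : ℂ} {s : ℝ}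
    (hφ : ContinuousAt φ s) (hw : ∀ t, Complex.exp (φ t * I) = w t) (hd : HasDerivAt w w' s) :
    HasDerivAt φ (w' / w s).im s := by
  have hws : w s ≠ 0 := hw s ▸ Complex.exp_ne_zero _
  have hloc : φ =ᶠ[𝓝 s] fun t => φ s + (Complex.log (w t / w s)).im := by
    have hsmall : ∀ᶠ t in 𝓝 s, φ t - φ s ∈ Set.Ioo (-π) π :=
      (hφ.sub continuousAt_const).eventually <| Ioo_mem_nhds (by simp [pi_pos]) (by simp [pi_pos])
    filter_upwards [hsmall] with t ht
    rw [log_im, ← hw t, ← hw s, ← Complex.exp_sub, ← sub_mul, ← ofReal_sub, ← Circle.coe_exp,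
      Circle.arg_exp ht.1 ht.2.le]
    ring
  have hlog : HasDerivAt (fun t => Complex.log (w t / w s)) (w' / w s) s := by
    simpa [div_self hws] using (hd.div_const (w s)).clog_real (by simp [div_self hws])
  exact ((imCLM.hasFDerivAt.comp_hasDerivAt s hlog).const_add (φ s)).congr_of_eventuallyEq hloc

theorem exists_angle_of_rotating_unit_vector {κ x y : ℝ → ℝ}
    (hx : ∀ s, HasDerivAt x (y s * κ s) s) (hy : ∀ s, HasDerivAt y (-(x s * κ s)) s)
    (hunit : ∀ s, x s ^ 2 + y s ^ 2 = 1) :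
    ∃ φ : ℝ → ℝ, (∀ s, HasDerivAt φ (κ s) s) ∧ ∀ s, x s = sin (φ s) ∧ y s = cos (φ s) := by
  set w : ℝ → ℂ := fun t => y t + x t * Complex.I with hw
  have hwd : ∀ s, HasDerivAt w (Complex.I * κ s * w s) s := fun s => by
    refine ((hy s).ofReal_comp.add ((hx s).ofReal_comp.mul_const Complex.I)).congr_deriv ?_
    push_cast
    linear_combination (-(x s * κ s) : ℂ) * Complex.I_sq
  have hnorm : ∀ t, ‖w t‖ = 1 := fun t => by
    rw [hw, Complex.norm_add_mul_I, add_comm, hunit, sqrt_one]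
  obtain ⟨φ, hφc, hφ⟩ := exists_continuous_exp_mul_I_eq
    (continuous_iff_continuousAt.2 fun s => (hwd s).continuousAt) hnorm
  have hcoord : ∀ s, x s = sin (φ s) ∧ y s = cos (φ s) := fun s =>
    ⟨by simpa [hw] using (congrArg Complex.im (hφ s)).symm,
      by simpa [hw] using (congrArg Complex.re (hφ s)).symm⟩
  refine ⟨φ, fun s => ?_, hcoord⟩
  have hws : w s ≠ 0 := by rw [← norm_ne_zero_iff, hnorm]; exact one_ne_zero
  simpa [hws] using (hwd s).of_exp_mul_I_eq hφc.continuousAt hφ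

theorem sum_mul_deriv_eq_zero_of_sum_sq_eq {x y z x' y' z' : ℝ → ℝ} {c : ℝ}
    (hx : ∀ s, HasDerivAt x (x' s) s) (hy : ∀ s, HasDerivAt y (y' s) s)
    (hz : ∀ s, HasDerivAt z (z' s) s) (h : ∀ s, x s ^ 2 + y s ^ 2 + z s ^ 2 = c) (s : ℝ) :
    x s * x' s + y s * y' s + z s * z' s = 0 := by
  have hD : HasDerivAt (fun u => x u ^ 2 + y u ^ 2 + z u ^ 2)
      (2 * x s * x' s + 2 * y s * y' s + 2 * z s * z' s) s := by
    refine ((((hx s).pow 2).add ((hy s).pow 2)).add ((hz s).pow 2)).congr_deriv ?_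
    norm_num
  rw [funext h] at hD
  linear_combination (1 / 2 : ℝ) * hD.unique (hasDerivAt_const s c)

theorem mannheim_direction_coefficients_general
    (κ τ x y z x' y' z' : ℝ → ℝ)
    (hx : ∀ s, HasDerivAt x (x' s) s)
    (hy : ∀ s, HasDerivAt y (y' s) s)
    (hz : ∀ s, HasDerivAt z (z' s) s)
    (hunit : ∀ s, x s ^ 2 + y s ^ 2 + z s ^ 2 = 1)
    (hm1 : ∀ s, x' s - y s * κ s = 0)
    (hm2 : ∀ s, y' s + x s * κ s - z s * τ s = 0)
    (hm3 : ∀ s, z' s + y s * τ s ≠ 0) :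
    (∀ s, z s = 0) ∧
      ∃ φ : ℝ → ℝ, (∀ s, HasDerivAt φ (κ s) s) ∧
        ∀ s, x s = sin (φ s) ∧ y s = cos (φ s) := by
  have hz0 : ∀ s, z s = 0 := fun s => by
    have hzτ : z s * (z' s + y s * τ s) = 0 := by
      linear_combination sum_mul_deriv_eq_zero_of_sum_sq_eq hx hy hz hunit s
        - x s * hm1 s - y s * hm2 s
    exact (mul_eq_zero.1 hzτ).resolve_right (hm3 s)
  have hxκ : ∀ s, HasDerivAt x (y s * κ s) s :=
    fun s => (hx s).congr_deriv (by linarith [hm1 s])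
  have hyκ : ∀ s, HasDerivAt y (-(x s * κ s)) s :=
    fun s => (hy s).congr_deriv (by linear_combination hm2 s + τ s * hz0 s)
  have hunit₂ : ∀ s, x s ^ 2 + y s ^ 2 = 1 := fun s => by simpa [hz0 s] using hunit s
  exact ⟨hz0, exists_angle_of_rotating_unit_vector hxκ hyκ hunit₂⟩

/-- Mannheim condition forces `z ≡ 0`, `x = sin(∫κ)`,
`y = cos(∫κ)`. -/
theorem mannheim_direction_coefficients
    (κ τ x y z x' y' z' : ℝ → ℝ)
    (hκ : ∀ s, 0 < κ s)
    (hx : ∀ s, HasDerivAt x (x' s) s)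
    (hy : ∀ s, HasDerivAt y (y' s) s)
    (hz : ∀ s, HasDerivAt z (z' s) s)
    (hunit : ∀ s, x s ^ 2 + y s ^ 2 + z s ^ 2 = 1)
    (hm1 : ∀ s, x' s - y s * κ s = 0)
    (hm2 : ∀ s, y' s + x s * κ s - z s * τ s = 0)
    (hm3 : ∀ s, z' s + y s * τ s ≠ 0) :
    (∀ s, z s = 0) ∧
      ∃ φ : ℝ → ℝ, (∀ s, HasDerivAt φ (κ s) s) ∧
        ∀ s, x s = sin (φ s) ∧ y s = cos (φ s) :=
  mannheim_direction_coefficients_general κ τ x y z x' y' z' hx hy hz hunit hm1 hm2 hm3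
end

section
/- Let γ be a unit-speed curve with κ > 0 and torsion τ, let φ satisfy φ' = κ, and define β by β'(s) = sin(φ(s))T(s) + cos(φ(s))N(s). Then β has curvature κ_β = τ cos φ and torsion τ_β = τ sin φ, its principal normal equals B, and its binormal equals cos(φ)T - sin(φ)N. -/
open Real

/-- for β with `β' = sin(φ)•T + cos(φ)•N`, `φ' = κ`, the Frenet
apparatus of β is `N_β = B`, `B_β = cos(φ)•T - sin(φ)•N`,
`κ_β = τ cos φ`, `τ_β = τ sin φ`. -/
theorem mannheim_direction_frenet
    (T N B : ℝ → EuclideanSpace ℝ (Fin 3))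
    (κ τ φ : ℝ → ℝ)
    (hκ : ∀ s, 0 < κ s)
    (hT' : ∀ s, HasDerivAt T (κ s • N s) s)
    (hN' : ∀ s, HasDerivAt N (-(κ s) • T s + τ s • B s) s)
    (hB' : ∀ s, HasDerivAt B (-(τ s) • N s) s)
    (hφ : ∀ s, HasDerivAt φ (κ s) s)
    (hne : ∀ s, τ s * cos (φ s) ≠ 0)
    (β : ℝ → EuclideanSpace ℝ (Fin 3))
    (hβ : ∀ s, HasDerivAt β (sin (φ s) • T s + cos (φ s) • N s) s) :
    ∀ s,
      -- T_β' = κ_β • N_β with N_β = B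
      HasDerivAt (fun u => sin (φ u) • T u + cos (φ u) • N u)
        ((τ s * cos (φ s)) • B s) s ∧
      -- N_β' = -κ_β • T_β + τ_β • B_β
      HasDerivAt B
        ((-(τ s * cos (φ s))) • (sin (φ s) • T s + cos (φ s) • N s)
          + (τ s * sin (φ s)) • (cos (φ s) • T s - sin (φ s) • N s)) s ∧
      -- B_β' = -τ_β • N_β
      HasDerivAt (fun u => cos (φ u) • T u - sin (φ u) • N u)
        ((-(τ s * sin (φ s))) • B s) s := by
  intro s
  have hsin : HasDerivAt (fun u => sin (φ u)) (cos (φ s) * κ s) s :=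
    (Real.hasDerivAt_sin (φ s)).comp s (hφ s)
  have hcos : HasDerivAt (fun u => cos (φ u)) (-sin (φ s) * κ s) s :=
    (Real.hasDerivAt_cos (φ s)).comp s (hφ s)
  have h1 : HasDerivAt (fun u => sin (φ u) • T u + cos (φ u) • N u)
      ((sin (φ s) • (κ s • N s) + (cos (φ s) * κ s) • T s)
        + (cos (φ s) • (-(κ s) • T s + τ s • B s) + (-sin (φ s) * κ s) • N s)) s :=
    (hsin.smul (hT' s)).add (hcos.smul (hN' s))
  have h3 : HasDerivAt (fun u => cos (φ u) • T u - sin (φ u) • N u)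
      ((cos (φ s) • (κ s • N s) + (-sin (φ s) * κ s) • T s)
        - (sin (φ s) • (-(κ s) • T s + τ s • B s) + (cos (φ s) * κ s) • N s)) s :=
    (hcos.smul (hT' s)).sub (hsin.smul (hN' s))
  refine ⟨?_, ?_, ?_⟩
  · convert h1 using 1
    module
  · have := hB' s
    convert this using 1
    have h2 : sin (φ s) ^ 2 + cos (φ s) ^ 2 = 1 := sin_sq_add_cos_sq _
    match_scalars <;> first
      | linear_combination τ s * h2
      | linear_combination -τ s * h2
      | linear_combination 2*τ s * h2
      | linear_combination -2*τ s * h2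
      | ring
  · convert h3 using 1
    module
end

section
/- With β the Mannheim-direction curve (β' = sin(φ)T + cos(φ)N, φ' = κ) of a unit-speed curve γ with κ > 0 and τ ≠ 0, the curvatures satisfy τ = √(κ_β² + τ_β²) and κ = (κ_β²/(κ_β² + τ_β²))·(τ_β/κ_β)'. -/
open Real

/-- with `κ_β = τ cos φ`, `τ_β = τ sin φ` (φ' = κ, τ > 0), we have
`τ = √(κ_β² + τ_β²)` and `κ = (κ_β²/(κ_β²+τ_β²))·(τ_β/κ_β)'.` -/
theorem mannheim_direction_curvatures_inverse
    (κ τ φ : ℝ → ℝ)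
    (hκ : ∀ s, 0 < κ s) (hτ : ∀ s, 0 < τ s)
    (hφ : ∀ s, HasDerivAt φ (κ s) s)
    (hcos : ∀ s, cos (φ s) ≠ 0)
    (κβ τβ : ℝ → ℝ)
    (hκβ : ∀ s, κβ s = τ s * cos (φ s))
    (hτβ : ∀ s, τβ s = τ s * sin (φ s)) :
    ∀ s, τ s = Real.sqrt (κβ s ^ 2 + τβ s ^ 2) ∧
      κ s = κβ s ^ 2 / (κβ s ^ 2 + τβ s ^ 2)
        * deriv (fun u => τβ u / κβ u) s := by
  intro s
  have hsum : ∀ u, κβ u ^ 2 + τβ u ^ 2 = τ u ^ 2 := by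
    intro u
    rw [hκβ, hτβ]
    have := Real.sin_sq_add_cos_sq (φ u)
    nlinarith [this]
  constructor
  · rw [hsum s, Real.sqrt_sq (hτ s).le]
  · have hfun : (fun u => τβ u / κβ u) = fun u => Real.tan (φ u) := by
      funext u
      rw [hκβ, hτβ, Real.tan_eq_sin_div_cos,
        mul_div_mul_left _ _ (hτ u).ne']
    have hd : HasDerivAt (fun u => Real.tan (φ u)) (1 / cos (φ s) ^ 2 * κ s) s :=
      (Real.hasDerivAt_tan (hcos s)).comp s (hφ s)
    rw [hfun, hd.deriv, hsum s, hκβ]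
    have h1 : cos (φ s) ≠ 0 := hcos s
    have h2 : τ s ≠ 0 := (hτ s).ne'
    field_simp
end

section
/- With β the Mannheim-direction curve (β' = sin(φ)T + cos(φ)N, φ' = κ) of γ, one has τ_β/κ_β = tan(φ). In particular τ_β/κ_β is constant if and only if κ ≡ 0; hence if γ is a straight line then β is a general helix. -/
open Real

/-- for the Mannheim-direction curve, `τ_β/κ_β = tan φ`;
it is constant iff `κ ≡ 0`; hence if γ is a straight line then β is a
general helix. -/
theorem mannheim_direction_helix_ratio
    (κ τ φ : ℝ → ℝ)
    (hκ : ∀ s, 0 ≤ κ s)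
    (hφ : ∀ s, HasDerivAt φ (κ s) s)
    (hne : ∀ s, τ s * cos (φ s) ≠ 0)
    (κβ τβ : ℝ → ℝ)
    (hκβ : ∀ s, κβ s = τ s * cos (φ s))
    (hτβ : ∀ s, τβ s = τ s * sin (φ s)) :
    (∀ s, τβ s / κβ s = tan (φ s)) ∧
    ((∃ c, ∀ s, τβ s / κβ s = c) ↔ ∀ s, κ s = 0) ∧
    ((∀ s, κ s = 0) → ∃ c, ∀ s, τβ s / κβ s = c) := by
  have hcos : ∀ s, cos (φ s) ≠ 0 := fun s => right_ne_zero_of_mul (hne s)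
  have hτne : ∀ s, τ s ≠ 0 := fun s => left_ne_zero_of_mul (hne s)
  have hratio : ∀ s, τβ s / κβ s = tan (φ s) := by
    intro s
    rw [hτβ, hκβ, Real.tan_eq_sin_div_cos, mul_div_mul_left _ _ (hτne s)]
  have hzero : (∀ s, κ s = 0) → ∃ c, ∀ s, τβ s / κβ s = c := by
    intro h
    refine ⟨tan (φ 0), fun s => ?_⟩
    have hconst : φ s = φ 0 := by
      have hdiff : Differentiable ℝ φ := fun x => (hφ x).differentiableAt
      have : ∀ x, deriv φ x = 0 := by
        intro x
        rw [(hφ x).deriv, h x]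
      exact is_const_of_deriv_eq_zero hdiff this s 0
    rw [hratio, hconst]
  refine ⟨hratio, ⟨?_, hzero⟩, hzero⟩
  rintro ⟨c, hc⟩ s
  have htan : HasDerivAt (fun x => tan (φ x)) (1 / cos (φ s) ^ 2 * κ s) s :=
    (Real.hasDerivAt_tan (hcos s)).comp s (hφ s)
  have hconstf : (fun x => tan (φ x)) = fun _ => c := by
    funext x
    rw [← hratio, hc]
  rw [hconstf] at htan
  have := htan.unique (hasDerivAt_const s c)
  have hpos : (0:ℝ) < 1 / cos (φ s) ^ 2 := by
    have := pow_pos (abs_pos.mpr (hcos s)) 2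
    rw [← sq_abs]; positivity
  have := mul_eq_zero.mp this
  rcases this with h | h
  · exact absurd h hpos.ne'
  · exact h
end
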